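/- arXiv:1411.0706 — 5 statements merged into one kernel-verified Lean document; each statement's English description precedes it below -/
import Mathlib

section
/- Let p be prime and n a natural number with p-adic digits a_0, a_1, ..., a_s. Let σ_p(n) be the partition of n consisting of a_s copies of p^s, a_{s-1} copies of p^{s-1}, ..., a_1 copies of p, and a_0 copies of 1. Then the multinomial coefficient n!/∏(parts of σ_p(n))! is not divisible by p. -/
/-- The multinomial coefficient of a partition given as a multiset. -/
def multinom (n : ℕ) (σ : Multiset ℕ) : ℕ :=
  n.factorial / (σ.map Nat.factorial).prod

/-- σ is a partition of n: positive parts summing to n. -/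
def IsPartition (n : ℕ) (σ : Multiset ℕ) : Prop :=
  (∀ x ∈ σ, 0 < x) ∧ σ.sum = n

/-- The p-adic partition of n: a_i copies of p^i for each base-p digit a_i. -/
def padicPartition (p n : ℕ) : Multiset ℕ :=
  ∑ i ∈ Finset.range (Nat.digits p n).length,
    Multiset.replicate ((Nat.digits p n).getD i 0) (p ^ i)

/-!
By Legendre's formula, `(p - 1) * v_p(m!) = m - s_p(m)` with `s_p` the base-`p` digit sum.
Summing over the parts of a partition `σ` of `n` gives
`(p - 1) * v_p(∏ σᵢ!) = n - ∑ s_p(σᵢ)`, so the multinomial coefficient is prime to `p` exactly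
when `∑ s_p(σᵢ) = s_p(n)`. For the `p`-adic partition each part `p^i` has digit sum `1`, so
`∑ s_p(σᵢ) = ∑ aᵢ = s_p(n)`.
-/

open Nat

theorem Multiset.prod_map_factorial_dvd_factorial_sum (σ : Multiset ℕ) :
    (σ.map factorial).prod ∣ σ.sum ! := by
  induction σ using Multiset.induction_on with
  | empty => simp
  | cons a s ih =>
    rw [Multiset.map_cons, Multiset.prod_cons, Multiset.sum_cons]
    exact (mul_dvd_mul_left _ ih).trans (factorial_mul_factorial_dvd_factorial_add a s.sum)

theorem sub_one_mul_padicValNat_factorial_add_digit_sum (p : ℕ) [Fact p.Prime] (n : ℕ) :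
    (p - 1) * padicValNat p n ! + (p.digits n).sum = n := by
  rw [sub_one_mul_padicValNat_factorial, Nat.sub_add_cancel (digit_sum_le p n)]

theorem sub_one_mul_padicValNat_prod_factorial_add_digit_sum (p : ℕ) [Fact p.Prime]
    (σ : Multiset ℕ) :
    (p - 1) * padicValNat p (σ.map factorial).prod + (σ.map fun m => (p.digits m).sum).sum =
      σ.sum := by
  induction σ using Multiset.induction_on with
  | empty => simp
  | cons a s ih =>
    have hprod : (s.map factorial).prod ≠ 0 :=
      Multiset.prod_ne_zero (by simp [factorial_ne_zero])
    rw [Multiset.map_cons, Multiset.prod_cons, padicValNat.mul (factorial_ne_zero a) hprod,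
      Multiset.map_cons, Multiset.sum_cons, Multiset.sum_cons, ← ih]
    linarith [sub_one_mul_padicValNat_factorial_add_digit_sum p a]

theorem not_dvd_multinom_of_sum_digit_sum_eq {p : ℕ} (hp : p.Prime) (σ : Multiset ℕ)
    (hσ : (σ.map fun m => (p.digits m).sum).sum = (p.digits σ.sum).sum) :
    ¬ p ∣ multinom σ.sum σ := by
  have := Fact.mk hp
  have hdvd := σ.prod_map_factorial_dvd_factorial_sum
  have hval : padicValNat p (σ.map factorial).prod = padicValNat p σ.sum ! := by
    have hprod := sub_one_mul_padicValNat_prod_factorial_add_digit_sum p σ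
    have hsum := sub_one_mul_padicValNat_factorial_add_digit_sum p σ.sum
    rw [hσ] at hprod
    exact Nat.eq_of_mul_eq_mul_left (Nat.sub_pos_of_lt hp.one_lt) (by linarith)
  have hfac : multinom σ.sum σ * (σ.map factorial).prod = σ.sum ! :=
    Nat.div_mul_cancel hdvd
  have hmul_ne : multinom σ.sum σ ≠ 0 := left_ne_zero_of_mul (hfac ▸ factorial_ne_zero _)
  have hprod_ne : (σ.map factorial).prod ≠ 0 := right_ne_zero_of_mul (hfac ▸ factorial_ne_zero _)
  have hzero : padicValNat p (multinom σ.sum σ) = 0 := by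
    have := congrArg (padicValNat p) hfac
    rw [padicValNat.mul hmul_ne hprod_ne, hval] at this
    omega
  simpa [padicValNat.eq_zero_iff, hp.one_lt.ne', hmul_ne] using hzero

theorem List.sum_range_getD_mul_pow (b : ℕ) (L : List ℕ) :
    ∑ i ∈ Finset.range L.length, L.getD i 0 * b ^ i = ofDigits b L := by
  induction L with
  | nil => simp
  | cons a L ih =>
    rw [List.length_cons, Finset.sum_range_succ', ofDigits_cons, ← ih, Finset.mul_sum]
    simp only [List.getD_cons_succ, List.getD_cons_zero, pow_zero, mul_one, pow_succ]
    rw [add_comm]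
    congr 1
    exact Finset.sum_congr rfl fun i _ => by ring

theorem sum_map_padicPartition (p n : ℕ) (f : ℕ → ℕ) :
    ((padicPartition p n).map f).sum =
      ∑ i ∈ Finset.range (p.digits n).length, (p.digits n).getD i 0 * f (p ^ i) := by
  rw [padicPartition, ← Multiset.coe_mapAddMonoidHom, map_sum, Multiset.sum_sum]
  simp [Multiset.map_replicate]

theorem digit_sum_base_pow {b : ℕ} (hb : 1 < b) (i : ℕ) : (b.digits (b ^ i)).sum = 1 := by
  simpa [digits_of_lt b 1 one_ne_zero hb] using
    congrArg List.sum (digits_base_pow_mul hb one_pos (k := i))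

theorem padicPartition_sum (p n : ℕ) : (padicPartition p n).sum = n := by
  rw [← Multiset.map_id (padicPartition p n), sum_map_padicPartition]
  exact (List.sum_range_getD_mul_pow p _).trans (ofDigits_digits p n)

theorem sum_digit_sum_padicPartition (p n : ℕ) (hp : 1 < p) :
    ((padicPartition p n).map fun m => (p.digits m).sum).sum = (p.digits n).sum := by
  rw [sum_map_padicPartition]
  simpa [digit_sum_base_pow hp, ofDigits_one] using List.sum_range_getD_mul_pow 1 (p.digits n)

theorem padic_partition_multinomial_not_dvd (p n : ℕ) (hp : p.Prime) :
    ¬ p ∣ multinom n (padicPartition p n) := by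
  have hsum := padicPartition_sum p n
  have h := not_dvd_multinom_of_sum_digit_sum_eq hp (padicPartition p n)
    (by rw [hsum, sum_digit_sum_padicPartition p n hp.one_lt])
  rwa [hsum] at h
end

section
/- Let p be prime and s ≥ 1, and let n = p^s. For every partition σ of n all of whose parts are at most n - 2, the multinomial coefficient n!/∏σ_i! is divisible by p. -/
/-!
Removing one part `a` from `σ` factors the multinomial coefficient as `C(n, a)` times the
multinomial coefficient of the remaining parts, and `p ∣ C(p ^ s, a)` for `0 < a < p ^ s`.
-/

theorem Multiset.prod_factorial_mul_multinomial (m : Multiset ℕ) :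
    (m.map Nat.factorial).prod * m.multinomial = m.sum.factorial := by
  induction m using Multiset.induction with
  | empty => simp
  | cons a m ih =>
    rw [Multiset.map_cons, Multiset.prod_cons, Multiset.multinomial_cons, Multiset.sum_cons,
      ← Nat.add_choose_mul_factorial_mul_factorial, ← ih, Nat.choose_symm_add]
    ring

theorem multinom_sum_eq_multinomial (m : Multiset ℕ) : multinom m.sum m = m.multinomial := by
  have hprod : 0 < (m.map Nat.factorial).prod :=
    Multiset.prod_pos fun _ hx ↦ by
      obtain ⟨y, -, rfl⟩ := Multiset.mem_map.mp hx
      exact Nat.factorial_pos y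
  rw [multinom, ← Multiset.prod_factorial_mul_multinomial, Nat.mul_div_cancel_left _ hprod]

theorem Nat.Prime.dvd_multinomial_of_mem {p s a : ℕ} (hp : p.Prime) {m : Multiset ℕ}
    (hm : m.sum = p ^ s) (ha : a ∈ m) (ha₀ : a ≠ 0) (has : a ≠ p ^ s) :
    p ∣ m.multinomial := by
  rw [← Multiset.cons_erase ha, Multiset.multinomial_cons]
  have hsum : a + (m.erase a).sum = p ^ s := by rw [← Multiset.sum_cons, Multiset.cons_erase ha, hm]
  exact hsum ▸ (hp.dvd_choose_pow ha₀ has).mul_right _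

theorem prime_pow_all_dvd_general (p s : ℕ) (hp : p.Prime)
    (σ : Multiset ℕ) (hσ : IsPartition (p ^ s) σ)
    (hparts : ∀ x ∈ σ, x ≤ p ^ s - 2) :
    p ∣ multinom (p ^ s) σ := by
  obtain ⟨hpos, hsum⟩ := hσ
  have hne : σ ≠ 0 := by
    rintro rfl
    exact (pow_pos hp.pos s).ne' (by simpa using hsum.symm)
  obtain ⟨a, ha⟩ := Multiset.exists_mem_of_ne_zero hne
  have ha₀ := hpos a ha
  have has := hparts a ha
  rw [← hsum, multinom_sum_eq_multinomial]
  exact hp.dvd_multinomial_of_mem hsum ha (by omega) (by omega)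

theorem prime_pow_all_dvd (p s : ℕ) (hp : p.Prime) (hs : 1 ≤ s)
    (σ : Multiset ℕ) (hσ : IsPartition (p ^ s) σ)
    (hparts : ∀ x ∈ σ, x ≤ p ^ s - 2) :
    p ∣ multinom (p ^ s) σ :=
  prime_pow_all_dvd_general p s hp σ hσ hparts
end

section
/- Let q be prime and t ≥ 1, and let n = q^t + 1. For every partition σ of n all of whose parts are at most n - 2, the multinomial coefficient n!/∏σ_i! is divisible by q. -/
/-!
Splitting off one part `a` of `σ` factors the multinomial coefficient as `C(n, a)` times the
multinomial coefficient of the remaining parts. For `n = q^t + 1` and `2 ≤ a < q^t`, Pascal's rule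
writes `C(q^t + 1, a) = C(q^t, a - 1) + C(q^t, a)`, and both summands are divisible by `q` since
`0 < a - 1` and `a < q^t`. If no part is `≥ 2`, all parts are `1` and the coefficient is `n!`,
which `q ≤ n` divides.
-/

theorem Multiset.prod_map_factorial_dvd_factorial_sum_s5 (s : Multiset ℕ) :
    (s.map Nat.factorial).prod ∣ s.sum.factorial := by
  induction s using Multiset.induction with
  | empty => simp
  | cons a s ih =>
    rw [Multiset.map_cons, Multiset.prod_cons, Multiset.sum_cons]
    exact (mul_dvd_mul_left _ ih).trans (Nat.factorial_mul_factorial_dvd_factorial_add a s.sum)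

theorem multinom_cons (a : ℕ) (s : Multiset ℕ) :
    multinom (a + s.sum) (a ::ₘ s) = (a + s.sum).choose a * multinom s.sum s := by
  have hfact : (a + s.sum).factorial =
      a.factorial * ((a + s.sum).choose a * s.sum.factorial) := by
    rw [← Nat.choose_mul_factorial_mul_factorial (Nat.le_add_right a s.sum),
      Nat.add_sub_cancel_left]
    ring
  rw [multinom, multinom, Multiset.map_cons, Multiset.prod_cons, hfact,
    Nat.mul_div_mul_left _ _ (Nat.factorial_pos a),
    Nat.mul_div_assoc _ s.prod_map_factorial_dvd_factorial_sum_s5]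

theorem choose_dvd_multinom {σ : Multiset ℕ} {a : ℕ} (ha : a ∈ σ) :
    σ.sum.choose a ∣ multinom σ.sum σ := by
  obtain ⟨s, rfl⟩ := Multiset.exists_cons_of_mem ha
  rw [Multiset.sum_cons, multinom_cons]
  exact dvd_mul_right _ _

theorem multinom_of_forall_le_one (n : ℕ) {σ : Multiset ℕ} (hσ : ∀ x ∈ σ, x ≤ 1) :
    multinom n σ = n.factorial := by
  have hprod : (σ.map Nat.factorial).prod = 1 :=
    Multiset.prod_eq_one fun _ hx => by
      obtain ⟨x, hxσ, rfl⟩ := Multiset.mem_map.mp hx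
      exact Nat.factorial_eq_one.mpr (hσ x hxσ)
  rw [multinom, hprod, Nat.div_one]

theorem Nat.Prime.dvd_choose_pow_add_one {q t a : ℕ} (hq : q.Prime) (ha : 2 ≤ a)
    (haq : a < q ^ t) : q ∣ (q ^ t + 1).choose a := by
  obtain ⟨k, rfl⟩ : ∃ k, a = k + 1 := ⟨a - 1, by omega⟩
  rw [Nat.choose_succ_succ]
  exact dvd_add (hq.dvd_choose_pow (by omega) (by omega))
    (hq.dvd_choose_pow (by omega) (by omega))

theorem prime_pow_succ_all_dvd (q t : ℕ) (hq : q.Prime) (ht : 1 ≤ t)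
    (σ : Multiset ℕ) (hσ : IsPartition (q ^ t + 1) σ)
    (hparts : ∀ x ∈ σ, x ≤ q ^ t + 1 - 2) :
    q ∣ multinom (q ^ t + 1) σ := by
  obtain ⟨hpos, hsum⟩ := hσ
  by_cases hbig : ∃ a ∈ σ, 2 ≤ a
  · obtain ⟨a, haσ, ha⟩ := hbig
    have haq : a < q ^ t := by have := hparts a haσ; omega
    have hchoose := choose_dvd_multinom haσ
    rw [hsum] at hchoose
    exact (hq.dvd_choose_pow_add_one ha haq).trans hchoose
  · push Not at hbig
    rw [multinom_of_forall_le_one _ fun x hx => Nat.le_of_lt_succ (hbig x hx)]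
    exact Nat.dvd_factorial hq.pos ((Nat.le_self_pow (by omega) q).trans (Nat.le_succ _))
end

section
/- Let p be prime and s ≥ 1, and let n = p^s. The multinomial coefficient associated to the partition of n into p copies of p^{s-1}, namely (p^s)!/((p^{s-1})!)^p, is divisible by p but not by p². -/
/-! By Legendre's formula `(p - 1) · v_p(m!) = m - s_p(m)`, where `s_p` is the base-`p` digit sum,
together with `v_p((p m)!) = v_p(m!) + m`, the valuation of `(p m)! / (m!)^p` is
`v_p(m!) + m - p · v_p(m!) = s_p(m)`. For `m = p^(s-1)` the only nonzero digit is a single `1`. -/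

open Nat

theorem Nat.factorial_pow_dvd_factorial_mul (n m : ℕ) : m ! ^ n ∣ (n * m)! := by
  simpa [Finset.prod_const, Finset.sum_const] using
    Nat.prod_factorial_dvd_factorial_sum (Finset.range n) (fun _ => m)

theorem Nat.digits_sum_base_pow {b : ℕ} (hb : 1 < b) (k : ℕ) : (b.digits (b ^ k)).sum = 1 := by
  have h := Nat.digits_base_pow_mul (k := k) hb one_pos
  rw [mul_one, Nat.digits_of_lt b 1 one_ne_zero hb] at h
  simp [h]

theorem padicValNat_factorial_mul_div_factorial_pow (p : ℕ) [hp : Fact p.Prime] (m : ℕ) :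
    padicValNat p ((p * m)! / m ! ^ p) = (p.digits m).sum := by
  set q := (p * m)! / m ! ^ p
  have hq : q * m ! ^ p = (p * m)! := Nat.div_mul_cancel (Nat.factorial_pow_dvd_factorial_mul p m)
  have hq0 : q ≠ 0 := fun h => Nat.factorial_ne_zero _ (by rw [← hq, h, zero_mul])
  have hval : padicValNat p q + p * padicValNat p m ! = padicValNat p m ! + m := by
    rw [← padicValNat_factorial_mul, ← hq, padicValNat.mul hq0 (pow_ne_zero _ (factorial_ne_zero m)),
      padicValNat.pow]
  have hsplit : p * padicValNat p m ! = (p - 1) * padicValNat p m ! + padicValNat p m ! := by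
    rw [← Nat.succ_mul, Nat.succ_eq_add_one, Nat.sub_add_cancel hp.out.one_le]
  have hlegendre := sub_one_mul_padicValNat_factorial (p := p) m
  have hdigits := Nat.digit_sum_le p m
  omega

theorem prime_pow_special_partition (p s : ℕ) (hp : p.Prime) (hs : 1 ≤ s) :
    p ∣ (p ^ s).factorial / ((p ^ (s - 1)).factorial) ^ p ∧
      ¬ p ^ 2 ∣ (p ^ s).factorial / ((p ^ (s - 1)).factorial) ^ p := by
  have := Fact.mk hp
  obtain ⟨k, rfl⟩ : ∃ k, s = k + 1 := ⟨s - 1, by omega⟩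
  rw [Nat.add_sub_cancel, pow_succ']
  have hv : padicValNat p ((p * p ^ k)! / (p ^ k)! ^ p) = 1 := by
    rw [padicValNat_factorial_mul_div_factorial_pow, Nat.digits_sum_base_pow hp.one_lt]
  have hq0 : (p * p ^ k)! / (p ^ k)! ^ p ≠ 0 := fun h => by simp [h] at hv
  constructor
  · simpa using (padicValNat_dvd_iff_le (p := p) (n := 1) hq0).2 hv.ge
  · rw [padicValNat_dvd_iff_le hq0, hv]
    omega
end

section
/- Let n ≥ 3 be such that n is not a prime power and n - 1 is not a prime power. Then the greatest common divisor, over all partitions σ of n with every part at most n - 2, of the multinomial coefficients n!/∏σ_i! equals 1. -/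
/-- `g` is the gcd of the multinomial coefficients over all partitions of `n`
with every part at most `n - 2`. -/
def IsGcdOfMultinomials (n g : ℕ) : Prop :=
  (∀ σ : Multiset ℕ, IsPartition n σ → (∀ x ∈ σ, x ≤ n - 2) → g ∣ multinom n σ) ∧
    ∀ d : ℕ, (∀ σ : Multiset ℕ, IsPartition n σ → (∀ x ∈ σ, x ≤ n - 2) → d ∣ multinom n σ) →
      d ∣ g

theorem Multiset.multinomial_mul_prod_factorial (σ : Multiset ℕ) :
    σ.multinomial * (σ.map Nat.factorial).prod = σ.sum.factorial := by
  induction σ using Multiset.induction_on with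
  | empty => simp
  | cons a σ ih =>
    rw [multinomial_cons, map_cons, prod_cons, sum_cons,
      ← Nat.add_choose_mul_factorial_mul_factorial, ← ih, Nat.choose_symm_add]
    ring

theorem multinom_eq_multinomial {n : ℕ} {σ : Multiset ℕ} (h : σ.sum = n) :
    multinom n σ = σ.multinomial := by
  rw [multinom, ← h, ← σ.multinomial_mul_prod_factorial,
    Nat.mul_div_cancel _ (Multiset.prod_pos (by simp [Nat.factorial_pos]))]

theorem exists_not_dvd_choose_of_not_isPrimePow {p m : ℕ} (hp : p.Prime) (hpm : p ∣ m)
    (hm : ¬ IsPrimePow m) (hm1 : 1 < m) :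
    ∃ k, 2 ≤ k ∧ 2 ≤ m - k ∧ ¬ p ∣ m.choose k := by
  by_contra! h
  apply hp.not_dvd_one
  rw [← Choose.gcd_choose_eq_one_of_not_isPrimePow hm1 hm]
  refine Finset.dvd_gcd fun k hk ↦ ?_
  obtain ⟨hk1, hkm⟩ := Finset.mem_Icc.1 hk
  obtain rfl | hk1 := hk1.eq_or_lt
  · rwa [Nat.choose_one_right]
  obtain rfl | hkm := hkm.eq_or_lt
  · rwa [Nat.choose_symm_of_eq_add (show m = (m - 1) + 1 by omega), Nat.choose_one_right]
  exact h k hk1 (by omega)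

def DividesMultinomials (n d : ℕ) : Prop :=
  ∀ σ : Multiset ℕ, IsPartition n σ → (∀ x ∈ σ, x ≤ n - 2) → d ∣ multinom n σ

namespace DividesMultinomials

open Multiset

variable {n d : ℕ}

theorem of_dvd {e : ℕ} (h : DividesMultinomials n d) (hed : e ∣ d) : DividesMultinomials n e :=
  fun σ hσ hle ↦ hed.trans (h σ hσ hle)

theorem dvd_multinomial (h : DividesMultinomials n d) {σ : Multiset ℕ} (hσ : σ.sum = n)
    (hparts : ∀ x ∈ σ, 0 < x ∧ x ≤ n - 2) : d ∣ σ.multinomial :=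
  multinom_eq_multinomial hσ ▸ h σ ⟨fun x hx ↦ (hparts x hx).1, hσ⟩ fun x hx ↦ (hparts x hx).2

theorem dvd_choose (h : DividesMultinomials n d) {k : ℕ} (hk : 2 ≤ k) (hnk : 2 ≤ n - k) :
    d ∣ n.choose k := by
  have hdvd := h.dvd_multinomial (σ := {k, n - k})
    (by rw [insert_eq_cons, sum_cons, sum_singleton]; omega)
    (by simp only [insert_eq_cons, mem_cons, mem_singleton, forall_eq_or_imp, forall_eq]; omega)
  rwa [insert_eq_cons, multinomial_cons, multinomial_singleton, sum_singleton,
    Nat.add_sub_of_le (by omega), mul_one] at hdvd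

theorem dvd_mul_choose (h : DividesMultinomials n d) {k : ℕ} (hk : 1 ≤ k) (hnk : k + 2 ≤ n) :
    d ∣ n * (n - 1).choose k := by
  have hdvd := h.dvd_multinomial (σ := {1, k, n - 1 - k})
    (by rw [insert_eq_cons, insert_eq_cons, sum_cons, sum_cons, sum_singleton]; omega)
    (by simp only [insert_eq_cons, mem_cons, mem_singleton, forall_eq_or_imp, forall_eq]; omega)
  rwa [insert_eq_cons, insert_eq_cons, multinomial_cons, multinomial_cons, multinomial_singleton,
    sum_cons, sum_singleton, Nat.add_sub_of_le (by omega), Nat.add_sub_of_le (by omega),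
    Nat.choose_one_right, mul_one] at hdvd

end DividesMultinomials

theorem gcd_multinomials_one (n : ℕ) (hn : 3 ≤ n)
    (h1 : ¬ IsPrimePow n) (h2 : ¬ IsPrimePow (n - 1)) :
    IsGcdOfMultinomials n 1 := by
  refine ⟨fun _ _ _ ↦ one_dvd _, fun d hd ↦ Nat.dvd_one.2 <|
    Nat.eq_one_iff_not_exists_prime_dvd.2 fun p hp hpd ↦ ?_⟩
  have hp_dvd : DividesMultinomials n p := DividesMultinomials.of_dvd hd hpd
  by_cases hpn : p ∣ n
  · obtain ⟨k, hk, hnk, hpk⟩ := exists_not_dvd_choose_of_not_isPrimePow hp hpn h1 (by omega)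
    exact hpk (hp_dvd.dvd_choose hk hnk)
  · have hpn1 : p ∣ n - 1 := by
      simpa [hpn] using hp.dvd_mul.1 (hp_dvd.dvd_mul_choose (k := 1) le_rfl (by omega))
    obtain ⟨k, hk, hnk, hpk⟩ := exists_not_dvd_choose_of_not_isPrimePow hp hpn1 h2 (by omega)
    exact (hp.dvd_mul.1 (hp_dvd.dvd_mul_choose (by omega) (by omega))).elim hpn hpk
end
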